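/- For λ in the Gårding cone Γ_k and integers n ≥ k > l ≥ 0, Σ_{i=1}^n ∂/∂λ_i [ (σ_k/σ_l)^{1/(k-l)} ](λ) ≥ [C(n,k)/C(n,l)]^{1/(k-l)}. -/

import Mathlib

/-- The `j`-th elementary symmetric polynomial of `lam ∈ ℝ^n`. -/
def esymm (n j : ℕ) (lam : Fin n → ℝ) : ℝ :=
  ∑ s ∈ Finset.univ.powersetCard j, ∏ i ∈ s, lam i

/-- The Gårding cone `Γ_k = {λ ∈ ℝ^n : σ_i(λ) > 0, 1 ≤ i ≤ k}`. -/
def gardingCone (n k : ℕ) : Set (Fin n → ℝ) :=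
  {lam | ∀ i : ℕ, 1 ≤ i → i ≤ k → 0 < esymm n i lam}

/-!
Write `p_j = σ_j / C(n, j)`. Newton's inequalities `p_j p_{j+2} ≤ p_{j+1}²` hold for every real
`λ`: the roots of the derivative of `∏ (X - λ_i)` are real (Rolle) and have the same `p_j`, which
reduces them to `n = j + 2`, where they are Cauchy–Schwarz for the products `∏_{t ≠ i} λ_t`.
On `Γ_k` the `p_j` with `j ≤ k` are positive, so the ratios `p_{j+1} / p_j`, `j < k`, decrease.
Since `∑_i ∂_i σ_j = (n - j + 1) σ_{j-1} = j C(n, j) p_{j-1}`, the sum of the partial derivatives of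
`f = (σ_k/σ_l)^{1/(k-l)}` is `f/(k-l) · (k p_{k-1}/p_k - l p_{l-1}/p_l)`. With `r = p_k / p_{k-1}`
the bracket is at least `(k - l)/r`, and `p_k / p_l ≥ r^{k-l}` gives
`f ≥ (C(n,k)/C(n,l))^{1/(k-l)} r`.
-/

open Finset Polynomial Function

namespace Multiset

variable {R : Type*} [CommSemiring R]

theorem esymm_cons_succ (a : R) (s : Multiset R) (j : ℕ) :
    (a ::ₘ s).esymm (j + 1) = s.esymm (j + 1) + a * s.esymm j := by
  simp [Multiset.esymm, powersetCard_cons, sum_map_mul_left]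

theorem esymm_one (s : Multiset R) : s.esymm 1 = s.sum := by
  simp [Multiset.esymm, powersetCard_one]

theorem two_mul_esymm_two {R : Type*} [CommRing R] (s : Multiset R) :
    2 * s.esymm 2 = s.sum ^ 2 - (s.map (· ^ 2)).sum := by
  induction s using Multiset.induction_on with
  | empty => simp [Multiset.esymm, powersetCard_zero_right]
  | cons a s ih =>
    rw [esymm_cons_succ, esymm_one, mul_add, ih, sum_cons, map_cons, sum_cons]
    ring

end Multiset

noncomputable def Multiset.esymmMean {R : Type*} [Field R] (s : Multiset R) (j : ℕ) : R :=
  s.esymm j / (Multiset.card s).choose j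

/-- `t` is the multiset of roots of the derivative of `∏ (X - a)`, which by Rolle's theorem
has `m` real roots. -/
theorem Multiset.exists_card_eq_mul_esymm_eq (s : Multiset ℝ) {m : ℕ}
    (hs : Multiset.card s = m + 1) :
    ∃ t : Multiset ℝ, Multiset.card t = m ∧
      ∀ j ≤ m, (m + 1) * t.esymm j = (m + 1 - j : ℕ) * s.esymm j := by
  set P : ℝ[X] := (s.map fun a => X - C a).prod
  have hP : P.roots = s := roots_multiset_prod_X_sub_C s
  have hPdeg : P.natDegree = m + 1 := by rw [natDegree_multiset_prod_X_sub_C_eq_card, hs]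
  have hPmonic : P.Monic := monic_multiset_prod_of_monic _ _ fun a _ => monic_X_sub_C a
  have hrolle : m + 1 ≤ Multiset.card (derivative P).roots + 1 := by
    simpa [hP, hs] using P.card_roots_le_derivative
  have hdeg : (derivative P).natDegree = m := by
    have := natDegree_derivative_le P
    have := (derivative P).card_roots'
    omega
  have hroots : Multiset.card (derivative P).roots = (derivative P).natDegree := by
    have := (derivative P).card_roots'
    omega
  have hcoeff : ∀ j ≤ m, (derivative P).leadingCoeff * (derivative P).roots.esymm j
      = (m + 1 - j : ℕ) * s.esymm j := by
    intro j hj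
    have h1 := coeff_eq_esymm_roots_of_card hroots (k := m - j) (by omega)
    have h2 := coeff_eq_esymm_roots_of_card (p := P) (by rw [hP, hPdeg, hs]) (k := m - j + 1)
      (by omega)
    rw [coeff_derivative, h2, hPmonic.leadingCoeff, hdeg, hPdeg, hP,
      show m + 1 - (m - j + 1) = j by omega, show m - (m - j) = j by omega] at h1
    have hcast : ((m - j : ℕ) : ℝ) + 1 = (m + 1 - j : ℕ) := by
      rw [← Nat.cast_add_one, show m - j + 1 = m + 1 - j by omega]
    rw [hcast] at h1
    apply mul_left_cancel₀ (pow_ne_zero j (by norm_num : (-1 : ℝ) ≠ 0))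
    linear_combination -h1
  have hlc : (derivative P).leadingCoeff = m + 1 := by
    simpa [Multiset.esymm, Multiset.powersetCard_zero_left] using hcoeff 0 (Nat.zero_le m)
  exact ⟨(derivative P).roots, hroots.trans hdeg, fun j hj => hlc ▸ hcoeff j hj⟩

theorem Multiset.exists_card_eq_esymmMean_eq (s : Multiset ℝ) {m : ℕ}
    (hs : Multiset.card s = m + 1) :
    ∃ t : Multiset ℝ, Multiset.card t = m ∧ ∀ j ≤ m, t.esymmMean j = s.esymmMean j := by
  obtain ⟨t, ht, hts⟩ := s.exists_card_eq_mul_esymm_eq hs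
  refine ⟨t, ht, fun j hj => ?_⟩
  have hchoose : ((m.choose j : ℕ) : ℝ) * (m + 1) = ((m + 1).choose j : ℕ) * (m + 1 - j : ℕ) := by
    exact_mod_cast Nat.choose_mul_succ_eq m j
  have hpos : (0 : ℝ) < (m + 1 - j : ℕ) := by exact_mod_cast (by omega : 0 < m + 1 - j)
  have hC : (0 : ℝ) < m.choose j := by exact_mod_cast Nat.choose_pos hj
  have hC' : (0 : ℝ) < (m + 1).choose j := by exact_mod_cast Nat.choose_pos (by omega)
  rw [Multiset.esymmMean, Multiset.esymmMean, ht, hs, div_eq_div_iff hC.ne' hC'.ne']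
  apply mul_left_cancel₀ hpos.ne'
  linear_combination (m.choose j : ℝ) * hts j hj - t.esymm j * hchoose

section Fintype

variable {ι : Type*} [Fintype ι] [DecidableEq ι]

theorem esymm_univ_eq_sum_compl {R : Type*} [CommSemiring R]
    (x : ι → R) {a b : ℕ} (h : Fintype.card ι = a + b) :
    (univ.val.map x).esymm a = ∑ t ∈ univ.powersetCard b, ∏ i ∈ tᶜ, x i := by
  rw [Finset.esymm_map_val]
  refine Finset.sum_nbij' compl compl (fun t ht => ?_) (fun t ht => ?_) (fun t _ => compl_compl t)
    (fun t _ => compl_compl t) (fun t _ => by rw [compl_compl])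
  all_goals
    simp only [mem_powersetCard_univ, card_compl] at ht ⊢
    omega

theorem prod_pair_prod_compl_singleton {R : Type*} [CommMonoid R] (x : ι → R) {a b : ι}
    (hab : a ≠ b) :
    (∏ i ∈ {a}ᶜ, x i) * ∏ i ∈ {b}ᶜ, x i = (∏ i ∈ {a, b}ᶜ, x i) * ∏ i, x i := by
  have ha : ∏ i ∈ {a}ᶜ, x i = x b * ∏ i ∈ {a, b}ᶜ, x i := by
    rw [pair_comm, compl_insert, mul_prod_erase _ _ (by simpa using hab.symm)]
  have hb : ∏ i ∈ {b}ᶜ, x i = x a * ∏ i ∈ {a, b}ᶜ, x i := by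
    rw [compl_insert, mul_prod_erase _ _ (by simpa using hab)]
  rw [ha, hb, ← prod_mul_prod_compl {a, b} x, prod_pair hab]
  ac_rfl

theorem two_mul_esymm_mul_esymm_le_of_card_eq (x : ι → ℝ) {j : ℕ} (h : Fintype.card ι = j + 2) :
    2 * (j + 2) * ((univ.val.map x).esymm j * (univ.val.map x).esymm (j + 2))
      ≤ (j + 1) * (univ.val.map x).esymm (j + 1) ^ 2 := by
  set P : ι → ℝ := fun i => ∏ t ∈ {i}ᶜ, x t
  have hP1 : (univ.val.map x).esymm (j + 1) = ∑ i, P i := by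
    rw [esymm_univ_eq_sum_compl x (b := 1) (by omega), powersetCard_one, sum_map]
    rfl
  have hP2 : (univ.val.map x).esymm j * (univ.val.map x).esymm (j + 2)
      = (univ.val.map P).esymm 2 := by
    rw [esymm_univ_eq_sum_compl x (b := 2) h, esymm_univ_eq_sum_compl x (b := 0) (by omega),
      powersetCard_zero, sum_singleton, compl_empty, sum_mul, esymm_map_val]
    refine sum_congr rfl fun t ht => ?_
    obtain ⟨a, b, hab, rfl⟩ := card_eq_two.1 (mem_powersetCard_univ.1 ht)
    rw [prod_pair hab, prod_pair_prod_compl_singleton x hab]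
  have hCS : (∑ i, P i) ^ 2 ≤ (j + 2) * ∑ i, P i ^ 2 := by
    simpa [h] using sq_sum_le_card_mul_sum_sq (s := univ) (f := P)
  have h2 := Multiset.two_mul_esymm_two (univ.val.map P)
  simp only [Multiset.map_map, Function.comp_def, ← sum_eq_multiset_sum] at h2
  rw [hP1, hP2]
  nlinarith

theorem map_univ_val_update {α : Type*} (f : ι → α) (i : ι) (x : α) :
    univ.val.map (update f i x) = x ::ₘ (univ.erase i).val.map f := by
  conv_lhs => rw [← insert_erase (mem_univ i), insert_val_of_notMem (notMem_erase i _)]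
  rw [Multiset.map_cons, update_self]
  congr 1
  exact Multiset.map_congr rfl fun t ht => update_of_ne (ne_of_mem_erase ht) x f

theorem sum_esymm_map_val_erase {R : Type*} [CommSemiring R] (f : ι → R) (j : ℕ) :
    ∑ i, ((univ.erase i).val.map f).esymm j
      = (Fintype.card ι - j : ℕ) * (univ.val.map f).esymm j := by
  simp only [esymm_map_val]
  rw [sum_comm' (t' := univ.powersetCard j) (s' := fun t => tᶜ) (fun i t => by
    simp [mem_powersetCard, subset_erase, and_comm])]
  rw [mul_sum]
  refine sum_congr rfl fun t ht => ?_
  rw [sum_const, card_compl, (mem_powersetCard_univ.1 ht), nsmul_eq_mul]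

end Fintype

theorem Multiset.esymmMean_mul_esymmMean_le_sq (s : Multiset ℝ) {j : ℕ}
    (hj : j + 2 ≤ Multiset.card s) :
    s.esymmMean j * s.esymmMean (j + 2) ≤ s.esymmMean (j + 1) ^ 2 := by
  suffices ∀ n, j + 2 ≤ n → ∀ s : Multiset ℝ, Multiset.card s = n →
      s.esymmMean j * s.esymmMean (j + 2) ≤ s.esymmMean (j + 1) ^ 2 from this _ hj s rfl
  intro n hn
  induction n, hn using Nat.le_induction with
  | base =>
    intro s hs
    classical
    have key := two_mul_esymm_mul_esymm_le_of_card_eq (fun x : s => (x : ℝ))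
      (by rw [Multiset.card_coe, hs])
    rw [Multiset.map_univ_coe] at key
    have hC : ((j + 2).choose j : ℝ) = (j + 2) * (j + 1) / 2 := by
      rw [Nat.choose_symm_add, Nat.cast_choose_two]
      push_cast
      ring
    simp only [Multiset.esymmMean, hs, hC, Nat.choose_succ_self_right, Nat.choose_self]
    push_cast
    rw [div_pow, div_mul_div_comm, div_le_div_iff₀ (by positivity) (by positivity)]
    nlinarith
  | succ m hm ih =>
    intro s hs
    obtain ⟨t, ht, hmean⟩ := s.exists_card_eq_esymmMean_eq hs
    rw [← hmean j (by omega), ← hmean (j + 1) (by omega), ← hmean (j + 2) hm]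
    exact ih t ht

theorem esymm_eq_esymm_map_val (n j : ℕ) (lam : Fin n → ℝ) :
    esymm n j lam = (univ.val.map lam).esymm j :=
  (esymm_map_val lam univ j).symm

theorem esymm_zero (n : ℕ) (lam : Fin n → ℝ) : esymm n 0 lam = 1 := by
  simp [esymm]

theorem esymm_eq_choose_mul_esymmMean {n j : ℕ} (lam : Fin n → ℝ) (hj : j ≤ n) :
    esymm n j lam = n.choose j * (univ.val.map lam).esymmMean j := by
  have : (n.choose j : ℝ) ≠ 0 := by exact_mod_cast (Nat.choose_pos hj).ne'
  rw [Multiset.esymmMean, esymm_eq_esymm_map_val, Multiset.card_map, card_val, card_univ,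
    Fintype.card_fin, mul_div_cancel₀ _ this]

theorem hasDerivAt_esymm_succ_update (n j : ℕ) (lam : Fin n → ℝ) (i : Fin n) :
    HasDerivAt (fun x => esymm n (j + 1) (update lam i x))
      (((univ.erase i).val.map lam).esymm j) (lam i) := by
  simp_rw [esymm_eq_esymm_map_val, map_univ_val_update, Multiset.esymm_cons_succ]
  simpa using ((hasDerivAt_id (lam i)).mul_const (((univ.erase i).val.map lam).esymm j)).const_add
    (((univ.erase i).val.map lam).esymm (j + 1))

theorem exists_hasDerivAt_esymm_update {n j : ℕ} (lam : Fin n → ℝ) (hj : j ≤ n) :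
    ∃ D : Fin n → ℝ, (∀ i, HasDerivAt (fun x => esymm n j (update lam i x)) (D i) (lam i)) ∧
      ∑ i, D i = n.choose j * (j * (univ.val.map lam).esymmMean (j - 1)) := by
  cases j with
  | zero =>
    exact ⟨0, fun i => by simpa [esymm_zero] using hasDerivAt_const (lam i) (1 : ℝ), by simp⟩
  | succ j =>
    refine ⟨_, hasDerivAt_esymm_succ_update n j lam, ?_⟩
    have hchoose : ((n.choose (j + 1) : ℕ) : ℝ) * (j + 1) = (n.choose j : ℕ) * (n - j : ℕ) := by
      exact_mod_cast Nat.choose_succ_right_eq n j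
    rw [sum_esymm_map_val_erase, Fintype.card_fin, ← esymm_eq_esymm_map_val,
      esymm_eq_choose_mul_esymmMean lam (by omega), Nat.add_sub_cancel]
    push_cast
    linear_combination (univ.val.map lam).esymmMean j * hchoose.symm

theorem esymm_pos_of_mem_gardingCone {n k j : ℕ} {lam : Fin n → ℝ} (hlam : lam ∈ gardingCone n k)
    (hj : j ≤ k) : 0 < esymm n j lam := by
  rcases j.eq_zero_or_pos with rfl | hj0
  · simp [esymm_zero]
  · exact hlam j hj0 hj

theorem HasDerivAt.div_rpow_const {f g : ℝ → ℝ} {f' g' x : ℝ} (hf : HasDerivAt f f' x)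
    (hg : HasDerivAt g g' x) (hfx : 0 < f x) (hgx : 0 < g x) (c : ℝ) :
    HasDerivAt (fun t => (f t / g t) ^ c) (c * (f x / g x) ^ c * (f' / f x - g' / g x)) x := by
  refine ((hf.div hg hgx.ne').rpow_const (p := c) (Or.inl (div_pos hfx hgx).ne')).congr_deriv ?_
  rw [Pi.div_apply, Real.rpow_sub_one (div_pos hfx hgx).ne']
  field_simp

section LogConcave

variable {p : ℕ → ℝ} {k : ℕ}

theorem antitoneOn_div_of_mul_le_sq (hpos : ∀ j ≤ k, 0 < p j)
    (hlc : ∀ j, j + 2 ≤ k → p j * p (j + 2) ≤ p (j + 1) ^ 2) :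
    AntitoneOn (fun j => p (j + 1) / p j) (Set.Iio k) := by
  refine antitoneOn_of_add_one_le Set.ordConnected_Iio fun j _ _ hj => ?_
  simp only [Set.mem_Iio] at hj
  rw [div_le_div_iff₀ (hpos _ (by omega)) (hpos _ (by omega))]
  nlinarith [hlc j (by omega)]

theorem mul_pow_le_of_le_div (hpos : ∀ j ≤ k, 0 < p j) {r : ℝ} (hr : 0 ≤ r)
    {l : ℕ} (hl : l ≤ k) (h : ∀ j, l ≤ j → j < k → r ≤ p (j + 1) / p j) :
    p l * r ^ (k - l) ≤ p k := by
  induction k, hl using Nat.le_induction with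
  | base => simp
  | succ k hlk ih =>
    have hk := hpos k (by omega)
    calc p l * r ^ (k + 1 - l) = p l * r ^ (k - l) * r := by
          rw [Nat.sub_add_comm hlk, pow_succ, mul_assoc]
      _ ≤ p k * (p (k + 1) / p k) := by
          gcongr
          · exact ih (fun j hj => hpos j (by omega)) fun j hj hjk => h j hj (by omega)
          · exact h k hlk (by omega)
      _ = p (k + 1) := mul_div_cancel₀ _ hk.ne'

theorem one_le_mul_rpow_mul_sub (hpos : ∀ j ≤ k, 0 < p j)
    (hlc : ∀ j, j + 2 ≤ k → p j * p (j + 2) ≤ p (j + 1) ^ 2) {l : ℕ} (hlk : l < k) :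
    1 ≤ 1 / ((k : ℝ) - l) * (p k / p l) ^ (1 / ((k : ℝ) - l))
      * (k * p (k - 1) / p k - l * p (l - 1) / p l) := by
  have hkl : (0 : ℝ) < k - l := sub_pos.2 (by exact_mod_cast hlk)
  have hanti := antitoneOn_div_of_mul_le_sq hpos hlc
  set r := p k / p (k - 1)
  have hratio : ∀ j < k, r ≤ p (j + 1) / p j := fun j hj => by
    simpa [r, Nat.sub_add_cancel (by omega : 1 ≤ k)] using
      hanti (Set.mem_Iio.2 hj) (Set.mem_Iio.2 (by omega : k - 1 < k)) (by omega)
  have hr : 0 < r := div_pos (hpos k le_rfl) (hpos _ (by omega))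
  have hk : (k : ℝ) * p (k - 1) / p k = k / r := by
    rw [div_div_eq_mul_div, mul_div_assoc]
  have hl : (l : ℝ) * p (l - 1) / p l ≤ l / r := by
    rcases l.eq_zero_or_pos with rfl | hl0
    · simp
    have := hratio (l - 1) (by omega)
    rw [Nat.sub_add_cancel hl0] at this
    rw [mul_div_assoc, div_eq_mul_one_div (l : ℝ), ← one_div_div (p l)]
    exact mul_le_mul_of_nonneg_left (one_div_le_one_div_of_le hr this) (Nat.cast_nonneg l)
  have hpow : r ≤ (p k / p l) ^ (1 / ((k : ℝ) - l)) := by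
    have := mul_pow_le_of_le_div hpos hr.le hlk.le fun j _ hj => hratio j hj
    rw [← le_div_iff₀' (hpos l hlk.le)] at this
    calc r = (r ^ (k - l)) ^ ((((k - l : ℕ) : ℝ))⁻¹) :=
          (Real.pow_rpow_inv_natCast hr.le (by omega)).symm
      _ ≤ _ := by
          rw [Nat.cast_sub hlk.le, one_div]
          gcongr
  calc (1 : ℝ) = 1 / ((k : ℝ) - l) * r * ((k - l) / r) := by field_simp
    _ ≤ 1 / ((k : ℝ) - l) * (p k / p l) ^ (1 / ((k : ℝ) - l)) * (k / r - l / r) := by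
        rw [sub_div]
        gcongr
        · rw [← sub_div]; positivity
    _ ≤ _ := by
        rw [hk]
        have := hr.trans_le hpow
        gcongr

end LogConcave

/-- For `λ ∈ Γ_k` and `n ≥ k > l ≥ 0`,
`Σ_i ∂/∂λ_i [(σ_k/σ_l)^{1/(k-l)}](λ) ≥ (C(n,k)/C(n,l))^{1/(k-l)}`. -/
theorem stmt8 (n k l : ℕ) (hkn : k ≤ n) (hlk : l < k)
    (lam : Fin n → ℝ) (hlam : lam ∈ gardingCone n k) :
    ∃ d : Fin n → ℝ,
      (∀ i : Fin n,
        HasDerivAt (fun t : ℝ =>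
          (esymm n k (Function.update lam i t) / esymm n l (Function.update lam i t))
            ^ ((1 : ℝ) / ((k : ℝ) - (l : ℝ))))
          (d i) (lam i)) ∧
      ((n.choose k : ℝ) / (n.choose l)) ^ ((1 : ℝ) / ((k : ℝ) - (l : ℝ))) ≤ ∑ i, d i := by
  set c : ℝ := 1 / ((k : ℝ) - l)
  set p : ℕ → ℝ := (univ.val.map lam).esymmMean
  have hln : l ≤ n := hlk.le.trans hkn
  have hσ : ∀ j ≤ k, 0 < esymm n j lam := fun j => esymm_pos_of_mem_gardingCone hlam
  have hC : ∀ j ≤ n, (0 : ℝ) < n.choose j := fun j hj => by exact_mod_cast Nat.choose_pos hj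
  have hσp : ∀ j ≤ n, esymm n j lam = n.choose j * p j :=
    fun j hj => esymm_eq_choose_mul_esymmMean lam hj
  have hp : ∀ j ≤ k, 0 < p j := fun j hj => by
    simpa [hσp j (hj.trans hkn), hC j (hj.trans hkn)] using hσ j hj
  have hnewton : ∀ j, j + 2 ≤ k → p j * p (j + 2) ≤ p (j + 1) ^ 2 := fun j hj =>
    Multiset.esymmMean_mul_esymmMean_le_sq _ (by simpa using hj.trans hkn)
  obtain ⟨Dk, hDk, hsumk⟩ := exists_hasDerivAt_esymm_update lam hkn
  obtain ⟨Dl, hDl, hsuml⟩ := exists_hasDerivAt_esymm_update lam hln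
  refine ⟨fun i => c * (esymm n k lam / esymm n l lam) ^ c
      * (Dk i / esymm n k lam - Dl i / esymm n l lam), fun i => ?_, ?_⟩
  · simpa only [update_eq_self] using (hDk i).div_rpow_const (hDl i)
      (by simpa only [update_eq_self] using hσ k le_rfl)
      (by simpa only [update_eq_self] using hσ l hlk.le) c
  rw [← mul_sum, sum_sub_distrib, ← sum_div, ← sum_div, hsumk, hsuml, hσp k hkn, hσp l hln,
    mul_div_mul_left _ _ (hC k hkn).ne', mul_div_mul_left _ _ (hC l hln).ne', mul_div_mul_comm,
    Real.mul_rpow (div_pos (hC k hkn) (hC l hln)).le (div_pos (hp k le_rfl) (hp l hlk.le)).le]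
  have hC_rpow : 0 ≤ ((n.choose k : ℝ) / n.choose l) ^ c := by positivity
  exact (le_mul_of_one_le_right hC_rpow (one_le_mul_rpow_mul_sub hp hnewton hlk)).trans_eq
    (by ring)
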